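/- For every integer j ≥ 2, the images in K of both ν_j and ν̄_j lie in the intermediate field of K generated over ℂ by the 4n−5 elements ν₂, ν₃, ν̄₃, ν₄, ν̄₄, …, ν_{2n−1}, ν̄_{2n−1}. -/

import Mathlib

open MvPolynomial Finset

noncomputable section

def Zv (n : ℕ) (j : Fin n) : MvPolynomial (Fin n ⊕ Fin n) ℂ := X (Sum.inl j)

def Wv (n : ℕ) (j : Fin n) : MvPolynomial (Fin n ⊕ Fin n) ℂ := X (Sum.inr j)

/-- The `k`-th normalized harmonic moment. -/
def nu (n : ℕ) [NeZero n] (k : ℕ) : MvPolynomial (Fin n ⊕ Fin n) ℂ :=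
  C (Complex.I / 4) *
    ∑ j : Fin n, (Wv n j - Wv n (j + 1)) *
      ∑ m ∈ Finset.range k, Zv n j ^ (k - 1 - m) * Zv n (j + 1) ^ m

/-- The `k`-th normalized anti-harmonic moment (roles of `z` and `w` interchanged). -/
def nubar (n : ℕ) [NeZero n] (k : ℕ) : MvPolynomial (Fin n ⊕ Fin n) ℂ :=
  C (Complex.I / 4) *
    ∑ j : Fin n, (Zv n j - Zv n (j + 1)) *
      ∑ m ∈ Finset.range k, Wv n j ^ (k - 1 - m) * Wv n (j + 1) ^ m

/-- The field of fractions `K = ℂ(z₁,…,zₙ,w₁,…,wₙ)` of `R`. -/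
abbrev KK (n : ℕ) := FractionRing (MvPolynomial (Fin n ⊕ Fin n) ℂ)

/-- The subfield of `K` generated over `ℂ` by the `4n−5` elements
`ν₂, ν₃, ν̄₃, …, ν_{2n−1}, ν̄_{2n−1}`. -/
def genField (n : ℕ) [NeZero n] : IntermediateField ℂ (KK n) :=
  IntermediateField.adjoin ℂ
    ({algebraMap (MvPolynomial (Fin n ⊕ Fin n) ℂ) (KK n) (nu n 2)} ∪
      {x : KK n | ∃ k, 3 ≤ k ∧ k ≤ 2 * n - 1 ∧
        (x = algebraMap (MvPolynomial (Fin n ⊕ Fin n) ℂ) (KK n) (nu n k) ∨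
         x = algebraMap (MvPolynomial (Fin n ⊕ Fin n) ℂ) (KK n) (nubar n k))})


open Matrix Polynomial


lemma det_mem_subfield {F : Type*} [Field F] {n : ℕ} (L : Subfield F)
    (M : Matrix (Fin n) (Fin n) F) (h : ∀ i j, M i j ∈ L) : M.det ∈ L := by
  rw [Matrix.det_apply]
  exact sum_mem fun σ _ => zsmul_mem (prod_mem fun i _ => h _ _) _

lemma adjugate_mem_subfield {F : Type*} [Field F] {n : ℕ} (L : Subfield F)
    (M : Matrix (Fin n) (Fin n) F) (h : ∀ i j, M i j ∈ L) (i j : Fin n) :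
    M.adjugate i j ∈ L := by
  rw [Matrix.adjugate_apply]
  refine det_mem_subfield L _ fun a b => ?_
  rw [Matrix.updateRow_apply]
  split
  · rw [Pi.single_apply]
    split
    · exact one_mem L
    · exact zero_mem L
  · exact h a b

/-- Main abstract lemma: the power sums `∑ c j * u j ^ k` all lie in any subfield containing
those with `k < 2 n`. -/
theorem moments_mem {F : Type*} [Field F] {n : ℕ} (hn : 0 < n) (u c : Fin n → F)
    (hu : Function.Injective u) (hc : ∀ j, c j ≠ 0) (L : Subfield F)
    (hs : ∀ k, k < 2 * n → (∑ j, c j * u j ^ k) ∈ L) :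
    ∀ k, (∑ j, c j * u j ^ k) ∈ L := by
  set s : ℕ → F := fun k => ∑ j, c j * u j ^ k with hsdef
  set p : Polynomial F := ∏ j : Fin n, (Polynomial.X - Polynomial.C (u j)) with hpdef
  have hpm : p.Monic := monic_prod_of_monic _ _ fun i _ => monic_X_sub_C _
  have hpd : p.natDegree = n := by
    rw [hpdef, Polynomial.natDegree_prod _ _ (fun i _ => (monic_X_sub_C (u i)).ne_zero)]
    simp
  set a : ℕ → F := fun i => p.coeff i with hadef
  have han : a n = 1 := by
    have := hpm.coeff_natDegree
    rwa [hpd] at this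
  have hroot : ∀ j, p.eval (u j) = 0 := by
    intro j
    rw [hpdef, Polynomial.eval_prod]
    exact Finset.prod_eq_zero (mem_univ j) (by simp)
  have heval : ∀ x : F, p.eval x = ∑ i ∈ range (n + 1), a i * x ^ i := by
    intro x
    rw [Polynomial.eval_eq_sum_range' (by omega : p.natDegree < n + 1)]
  have hrec : ∀ k, s (n + k) = - ∑ i ∈ range n, a i * s (i + k) := by
    intro k
    have h0 : ∑ i ∈ range (n + 1), a i * s (i + k) = 0 := by
      have : ∀ i ∈ range (n+1), a i * s (i + k) = ∑ j, c j * u j ^ k * (a i * u j ^ i) := by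
        intro i _
        rw [hsdef, Finset.mul_sum]
        refine Finset.sum_congr rfl fun j _ => ?_
        rw [pow_add]
        ring
      rw [Finset.sum_congr rfl this, Finset.sum_comm]
      refine Finset.sum_eq_zero fun j _ => ?_
      rw [← Finset.mul_sum, ← heval (u j), hroot j, mul_zero]
    rw [Finset.sum_range_succ, han, one_mul] at h0
    linear_combination h0
  set A : Matrix (Fin n) (Fin n) F := Matrix.of fun r j => u j ^ (r : ℕ) with hA
  set B : Matrix (Fin n) (Fin n) F := Matrix.of fun j i => c j * u j ^ (i : ℕ) with hB
  set M : Matrix (Fin n) (Fin n) F := Matrix.of fun r i => s ((i : ℕ) + (r : ℕ)) with hM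
  have hMAB : M = A * B := by
    ext r i
    rw [hM, hA, hB]
    simp only [Matrix.mul_apply, Matrix.of_apply, hsdef]
    refine Finset.sum_congr rfl fun j _ => ?_
    rw [pow_add]
    ring
  have hVd : (Matrix.vandermonde u).det ≠ 0 := by
    rw [Matrix.det_vandermonde]
    refine Finset.prod_ne_zero_iff.mpr fun i _ => Finset.prod_ne_zero_iff.mpr fun j hj => ?_
    refine sub_ne_zero.mpr fun h => ?_
    rw [Finset.mem_Ioi] at hj
    exact hj.ne' (hu h)
  have hAdet : A.det ≠ 0 := by
    have : A = (Matrix.vandermonde u)ᵀ := by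
      ext r j; rfl
    rw [this, Matrix.det_transpose]
    exact hVd
  have hBdet : B.det ≠ 0 := by
    have : B = Matrix.diagonal c * Matrix.vandermonde u := by
      ext j i
      rw [Matrix.diagonal_mul]
      rfl
    rw [this, Matrix.det_mul, Matrix.det_diagonal]
    exact mul_ne_zero (Finset.prod_ne_zero_iff.mpr fun j _ => hc j) hVd
  have hMdet : M.det ≠ 0 := by
    rw [hMAB, Matrix.det_mul]
    exact mul_ne_zero hAdet hBdet
  have hMmem : ∀ r i, M r i ∈ L := fun r i => hs _ (by have := r.2; have := i.2; omega)
  set bv : Fin n → F := fun r => - s (n + (r : ℕ)) with hb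
  have hbmem : ∀ r, bv r ∈ L := fun r => neg_mem (hs _ (by have := r.2; omega))
  have hMa : M.mulVec (fun i : Fin n => a (i : ℕ)) = bv := by
    funext r
    show ∑ i : Fin n, M r i * a (i : ℕ) = -s (n + (r : ℕ))
    have h1 : ∑ i : Fin n, M r i * a (i : ℕ) = ∑ i ∈ range n, a i * s (i + (r : ℕ)) := by
      rw [← Fin.sum_univ_eq_sum_range (fun i => a i * s (i + (r : ℕ))) n]
      refine Finset.sum_congr rfl fun i _ => ?_
      rw [hM]
      show s ((i : ℕ) + (r : ℕ)) * a (i : ℕ) = _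
      ring
    rw [h1, hrec (r : ℕ), neg_neg]
  have hadjb : M.adjugate.mulVec bv = M.det • (fun i : Fin n => a (i : ℕ)) := by
    rw [← hMa, Matrix.mulVec_mulVec, Matrix.adjugate_mul, Matrix.smul_mulVec,
      Matrix.one_mulVec]
  have haL : ∀ i : Fin n, a (i : ℕ) ∈ L := by
    intro i
    have h1 : a (i : ℕ) = (M.det)⁻¹ * (M.adjugate.mulVec bv i) := by
      rw [hadjb]
      show a (i:ℕ) = (M.det)⁻¹ * (M.det * a (i:ℕ))
      field_simp
    rw [h1]
    refine mul_mem (inv_mem (det_mem_subfield L M hMmem)) ?_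
    show ∑ r, M.adjugate i r * bv r ∈ L
    exact sum_mem fun r _ => mul_mem (adjugate_mem_subfield L M hMmem i r) (hbmem r)
  intro k
  induction k using Nat.strong_induction_on with
  | _ k ih =>
    by_cases hk : k < 2 * n
    · exact hs k hk
    · push_neg at hk
      show s k ∈ L
      have e : s k = - ∑ i ∈ range n, a i * s (i + (k - n)) := by
        have e2 : k = n + (k - n) := by omega
        conv_lhs => rw [e2]
        exact hrec _
      rw [e]
      refine neg_mem (sum_mem fun i hi => ?_)
      rw [Finset.mem_range] at hi
      have hia : a i ∈ L := haL ⟨i, hi⟩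
      exact mul_mem hia (ih _ (by omega))


section FinFacts


variable {n : ℕ} [NeZero n]

lemma fin_one_ne_zero (hn : 3 ≤ n) : (1 : Fin n) ≠ 0 := by
  intro h
  apply_fun Fin.val at h
  rw [Fin.val_one', Fin.val_zero, Nat.mod_eq_of_lt (by omega)] at h
  omega

lemma fin_two_ne_zero (hn : 3 ≤ n) : (2 : Fin n) ≠ 0 := by
  intro h
  have h2 : (Fin.ofNat n 2) = (2 : Fin n) := rfl
  rw [← h2] at h
  apply_fun Fin.val at h
  rw [Fin.val_ofNat, Fin.val_zero, Nat.mod_eq_of_lt (by omega)] at h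
  omega

lemma fin_add_one_ne (hn : 3 ≤ n) (j : Fin n) : j + 1 ≠ j := by
  intro h
  exact fin_one_ne_zero hn (add_left_cancel (a := j) (by rw [add_zero]; exact h))

lemma fin_sub_one_ne (hn : 3 ≤ n) (j : Fin n) : j - 1 ≠ j := by
  intro h
  rw [sub_eq_iff_eq_add] at h
  exact fin_add_one_ne hn j h.symm

lemma fin_add_one_ne_sub (hn : 3 ≤ n) (j : Fin n) : j + 1 ≠ j - 1 := by
  intro h
  have h3 : j + 0 = j + (1 + 1) := by
    rw [add_zero, ← add_assoc]
    rw [eq_comm, sub_eq_iff_eq_add] at h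
    exact h
  have h2 := (add_left_cancel h3).symm
  exact fin_two_ne_zero hn (by rw [← h2]; ext; simp [Fin.val_add])


end FinFacts

lemma cross_ne {n : ℕ} [NeZero n] (hn : 3 ≤ n) (j : Fin n) :
    (Wv n j - Wv n (j + 1)) * (Zv n (j - 1) - Zv n j) ≠
      (Wv n (j - 1) - Wv n j) * (Zv n j - Zv n (j + 1)) := by
  intro h
  have hnz : NeZero n := ‹_›
  set σ : Fin n ⊕ Fin n → ℂ := fun x =>
    if x = Sum.inl (j - 1) then 1 else if x = Sum.inr j then 1 else 0 with hσ
  apply_fun MvPolynomial.eval σ at h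
  have hZ : ∀ a : Fin n, MvPolynomial.eval σ (Zv n a) = if a = j - 1 then 1 else 0 := by
    intro a
    rw [Zv, MvPolynomial.eval_X, hσ]
    simp
  have hW : ∀ a : Fin n, MvPolynomial.eval σ (Wv n a) = if a = j then 1 else 0 := by
    intro a
    rw [Wv, MvPolynomial.eval_X, hσ]
    simp
  rw [_root_.map_mul, _root_.map_mul, _root_.map_sub, _root_.map_sub, _root_.map_sub, _root_.map_sub, hZ, hZ, hZ, hW, hW, hW] at h
  rw [if_pos rfl, if_pos rfl, if_neg (fin_add_one_ne hn j), if_neg (fin_sub_one_ne hn j),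
    if_neg (fun hh : j = j - 1 => fin_sub_one_ne hn j hh.symm),
    if_neg (fun hh : j + 1 = j - 1 => fin_add_one_ne_sub hn j hh)] at h
  norm_num at h


/-- Abel-summation reshaping of the moment sums. -/
lemma sum_reshape {F : Type*} [Field F] {n : ℕ} [NeZero n] (Z W B : Fin n → F) (t : F)
    (hB : ∀ j, W j - W (j + 1) = B j * (Z j - Z (j + 1))) (k : ℕ) :
    t * ∑ j : Fin n, (W j - W (j + 1)) * ∑ m ∈ range k, Z j ^ (k - 1 - m) * Z (j + 1) ^ m
      = ∑ j : Fin n, t * (B j - B (j - 1)) * Z j ^ k := by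
  have key : ∀ j : Fin n,
      (W j - W (j + 1)) * ∑ m ∈ range k, Z j ^ (k - 1 - m) * Z (j + 1) ^ m
        = B j * Z j ^ k - B j * Z (j + 1) ^ k := by
    intro j
    have hg := geom_sum₂_mul (Z (j + 1)) (Z j) k
    have hg' : (∑ m ∈ range k, Z j ^ (k - 1 - m) * Z (j + 1) ^ m) * (Z (j + 1) - Z j)
        = Z (j + 1) ^ k - Z j ^ k := by
      rw [← hg]
      congr 1
      exact Finset.sum_congr rfl fun m _ => mul_comm _ _
    rw [hB j]
    linear_combination (-(B j)) * hg'
  rw [Finset.sum_congr rfl fun j _ => key j, Finset.sum_sub_distrib]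
  have hre : ∑ j : Fin n, B j * Z (j + 1) ^ k = ∑ j : Fin n, B (j - 1) * Z j ^ k := by
    refine Fintype.sum_equiv (Equiv.addRight (1 : Fin n)) _ _ fun j => ?_
    simp only [Equiv.coe_addRight, add_sub_cancel_right]
  rw [hre, ← Finset.sum_sub_distrib, Finset.mul_sum]
  exact Finset.sum_congr rfl fun j _ => by ring



section Concrete


variable (n : ℕ) [NeZero n]

def phiK : MvPolynomial (Fin n ⊕ Fin n) ℂ →+* KK n :=
  algebraMap (MvPolynomial (Fin n ⊕ Fin n) ℂ) (KK n)

lemma phiK_inj : Function.Injective (phiK n) :=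
  IsFractionRing.injective _ _

def pZ (j : Fin n) : KK n := phiK n (Zv n j)

def pW (j : Fin n) : KK n := phiK n (Wv n j)

def tK : KK n := phiK n (MvPolynomial.C (Complex.I / 4))

def Bz (j : Fin n) : KK n := (pW n j - pW n (j + 1)) / (pZ n j - pZ n (j + 1))

def Bw (j : Fin n) : KK n := (pZ n j - pZ n (j + 1)) / (pW n j - pW n (j + 1))

def cz (j : Fin n) : KK n := tK n * (Bz n j - Bz n (j - 1))

def cw (j : Fin n) : KK n := tK n * (Bw n j - Bw n (j - 1))

lemma pZ_inj : Function.Injective (pZ n) := fun a b h =>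
  Sum.inl_injective (MvPolynomial.X_injective (phiK_inj n h))

lemma pW_inj : Function.Injective (pW n) := fun a b h =>
  Sum.inr_injective (MvPolynomial.X_injective (phiK_inj n h))

lemma pZ_sub_ne {a b : Fin n} (h : a ≠ b) : pZ n a - pZ n b ≠ 0 :=
  sub_ne_zero.mpr fun hh => h (pZ_inj n hh)

lemma pW_sub_ne {a b : Fin n} (h : a ≠ b) : pW n a - pW n b ≠ 0 :=
  sub_ne_zero.mpr fun hh => h (pW_inj n hh)

lemma tK_ne : tK n ≠ 0 := by
  intro h
  have h0 : phiK n (MvPolynomial.C (Complex.I / 4)) = phiK n 0 := by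
    rw [_root_.map_zero]; exact h
  have := phiK_inj n h0
  rw [_root_.map_eq_zero_iff _ (MvPolynomial.C_injective _ _)] at this
  exact (div_ne_zero Complex.I_ne_zero (by norm_num)) this

end Concrete


section Expand

variable {n : ℕ} [NeZero n] (hn : 3 ≤ n)

lemma hBz (hn : 3 ≤ n) (j : Fin n) : pW n j - pW n (j + 1) = Bz n j * (pZ n j - pZ n (j + 1)) := by
  rw [Bz, div_mul_cancel₀]
  exact pZ_sub_ne n (fun h => fin_add_one_ne hn j h.symm)

lemma hBw (hn : 3 ≤ n) (j : Fin n) : pZ n j - pZ n (j + 1) = Bw n j * (pW n j - pW n (j + 1)) := by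
  rw [Bw, div_mul_cancel₀]
  exact pW_sub_ne n (fun h => fin_add_one_ne hn j h.symm)

lemma nu_eq (hn : 3 ≤ n) (k : ℕ) :
    phiK n (nu n k) = ∑ j : Fin n, cz n j * pZ n j ^ k := by
  have expand : phiK n (nu n k)
      = tK n * ∑ j : Fin n, (pW n j - pW n (j + 1)) *
          ∑ m ∈ range k, pZ n j ^ (k - 1 - m) * pZ n (j + 1) ^ m := by
    rw [nu, _root_.map_mul, _root_.map_sum]
    congr 1
    refine Finset.sum_congr rfl fun j _ => ?_
    rw [_root_.map_mul, _root_.map_sub, _root_.map_sum]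
    congr 1
    refine Finset.sum_congr rfl fun m _ => ?_
    rw [_root_.map_mul, _root_.map_pow, _root_.map_pow]
    rfl
  rw [expand, sum_reshape (pZ n) (pW n) (Bz n) (tK n) (hBz hn) k]
  exact Finset.sum_congr rfl fun j _ => by rw [cz]

lemma nubar_eq (hn : 3 ≤ n) (k : ℕ) :
    phiK n (nubar n k) = ∑ j : Fin n, cw n j * pW n j ^ k := by
  have expand : phiK n (nubar n k)
      = tK n * ∑ j : Fin n, (pZ n j - pZ n (j + 1)) *
          ∑ m ∈ range k, pW n j ^ (k - 1 - m) * pW n (j + 1) ^ m := by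
    rw [nubar, _root_.map_mul, _root_.map_sum]
    congr 1
    refine Finset.sum_congr rfl fun j _ => ?_
    rw [_root_.map_mul, _root_.map_sub, _root_.map_sum]
    congr 1
    refine Finset.sum_congr rfl fun m _ => ?_
    rw [_root_.map_mul, _root_.map_pow, _root_.map_pow]
    rfl
  rw [expand, sum_reshape (pW n) (pZ n) (Bw n) (tK n) (hBw hn) k]
  exact Finset.sum_congr rfl fun j _ => by rw [cw]

lemma cz_ne (hn : 3 ≤ n) (j : Fin n) : cz n j ≠ 0 := by
  have e1 : phiK n ((Wv n j - Wv n (j + 1)) * (Zv n (j - 1) - Zv n j))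
      = (pW n j - pW n (j + 1)) * (pZ n (j - 1) - pZ n j) := by
    rw [_root_.map_mul, _root_.map_sub, _root_.map_sub]; rfl
  have e2 : phiK n ((Wv n (j - 1) - Wv n j) * (Zv n j - Zv n (j + 1)))
      = (pW n (j - 1) - pW n j) * (pZ n j - pZ n (j + 1)) := by
    rw [_root_.map_mul, _root_.map_sub, _root_.map_sub]; rfl
  rw [cz]
  refine mul_ne_zero (tK_ne n) ?_
  rw [Bz, Bz, sub_add_cancel, div_sub_div _ _
    (pZ_sub_ne n (fun h => fin_add_one_ne hn j h.symm))
    (pZ_sub_ne n (fun h => fin_sub_one_ne hn j h)), div_ne_zero_iff]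
  constructor
  · rw [sub_ne_zero]
    intro h
    refine cross_ne hn j (phiK_inj n ?_)
    rw [e1, e2]
    linear_combination h
  · exact mul_ne_zero (pZ_sub_ne n (fun h => fin_add_one_ne hn j h.symm))
      (pZ_sub_ne n (fun h => fin_sub_one_ne hn j h))

lemma cw_ne (hn : 3 ≤ n) (j : Fin n) : cw n j ≠ 0 := by
  have e1 : phiK n ((Wv n j - Wv n (j + 1)) * (Zv n (j - 1) - Zv n j))
      = (pW n j - pW n (j + 1)) * (pZ n (j - 1) - pZ n j) := by
    rw [_root_.map_mul, _root_.map_sub, _root_.map_sub]; rfl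
  have e2 : phiK n ((Wv n (j - 1) - Wv n j) * (Zv n j - Zv n (j + 1)))
      = (pW n (j - 1) - pW n j) * (pZ n j - pZ n (j + 1)) := by
    rw [_root_.map_mul, _root_.map_sub, _root_.map_sub]; rfl
  rw [cw]
  refine mul_ne_zero (tK_ne n) ?_
  rw [Bw, Bw, sub_add_cancel, div_sub_div _ _
    (pW_sub_ne n (fun h => fin_add_one_ne hn j h.symm))
    (pW_sub_ne n (fun h => fin_sub_one_ne hn j h)), div_ne_zero_iff]
  constructor
  · rw [sub_ne_zero]
    intro h
    refine cross_ne hn j (phiK_inj n ?_)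
    rw [e1, e2]
    linear_combination -h
  · exact mul_ne_zero (pW_sub_ne n (fun h => fin_add_one_ne hn j h.symm))
      (pW_sub_ne n (fun h => fin_sub_one_ne hn j h))

end Expand


section Telescope
variable {n : ℕ} [NeZero n]

lemma tel_sum (f : Fin n → MvPolynomial (Fin n ⊕ Fin n) ℂ) :
    ∑ j : Fin n, f (j + 1) = ∑ j : Fin n, f j :=
  Fintype.sum_equiv (Equiv.addRight (1 : Fin n)) _ _ fun j => rfl
lemma nu_zero : nu n 0 = 0 := by
  simp [nu]
lemma nu_one : nu n 1 = 0 := by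
  rw [nu]
  have : ∑ j : Fin n, (Wv n j - Wv n (j + 1)) *
      ∑ m ∈ Finset.range 1, Zv n j ^ (1 - 1 - m) * Zv n (j + 1) ^ m
      = ∑ j : Fin n, (Wv n j - Wv n (j + 1)) := by
    refine Finset.sum_congr rfl fun j _ => ?_
    simp
  rw [this, Finset.sum_sub_distrib, tel_sum (fun j => Wv n j), sub_self, mul_zero]
lemma nubar_two : nubar n 2 = - nu n 2 := by
  rw [eq_neg_iff_add_eq_zero, nubar, nu, ← mul_add, ← Finset.sum_add_distrib]
  have key : ∀ j : Fin n,
      ((Zv n j - Zv n (j + 1)) * ∑ m ∈ Finset.range 2, Wv n j ^ (2 - 1 - m) * Wv n (j + 1) ^ m) +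
      ((Wv n j - Wv n (j + 1)) * ∑ m ∈ Finset.range 2, Zv n j ^ (2 - 1 - m) * Zv n (j + 1) ^ m)
      = 2 * (Zv n j * Wv n j) - 2 * (Zv n (j + 1) * Wv n (j + 1)) := by
    intro j
    rw [Finset.sum_range_succ, Finset.sum_range_succ, Finset.sum_range_zero,
      Finset.sum_range_succ, Finset.sum_range_succ, Finset.sum_range_zero]
    norm_num
    ring
  rw [Finset.sum_congr rfl fun j _ => key j, Finset.sum_sub_distrib,
    tel_sum (fun j => 2 * (Zv n j * Wv n j)), sub_self, mul_zero]

end Telescope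

section GenMem

variable {n : ℕ} [NeZero n]

lemma gen_mem_nu (hn : 3 ≤ n) (k : ℕ) (h2 : 2 ≤ k) (hk : k ≤ 2 * n - 1) :
    algebraMap (MvPolynomial (Fin n ⊕ Fin n) ℂ) (KK n) (nu n k) ∈ genField n := by
  apply IntermediateField.subset_adjoin
  rcases eq_or_lt_of_le h2 with h | h
  · exact Set.mem_union_left _ (by rw [← h]; exact Set.mem_singleton _)
  · exact Set.mem_union_right _ ⟨k, by omega, hk, Or.inl rfl⟩

lemma gen_mem_nubar (hn : 3 ≤ n) (k : ℕ) (h2 : 3 ≤ k) (hk : k ≤ 2 * n - 1) :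
    algebraMap (MvPolynomial (Fin n ⊕ Fin n) ℂ) (KK n) (nubar n k) ∈ genField n :=
  IntermediateField.subset_adjoin ℂ _ (Set.mem_union_right _ ⟨k, h2, hk, Or.inr rfl⟩)

end GenMem

/-- Every harmonic and anti-harmonic moment, viewed in `K`, lies in the subfield generated
over `ℂ` by `ν₂, ν₃, ν̄₃, …, ν_{2n−1}, ν̄_{2n−1}`. -/
theorem statement8 (n : ℕ) [NeZero n] (hn : 3 ≤ n) (j : ℕ) (hj : 2 ≤ j) :
    algebraMap (MvPolynomial (Fin n ⊕ Fin n) ℂ) (KK n) (nu n j) ∈ genField n ∧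
    algebraMap (MvPolynomial (Fin n ⊕ Fin n) ℂ) (KK n) (nubar n j) ∈ genField n := by

  have hnz : 0 < n := by omega
  have hmemz : ∀ k, k < 2 * n → (∑ i : Fin n, cz n i * pZ n i ^ k) ∈ (genField n).toSubfield := by
    intro k hk
    rw [← nu_eq hn k]
    rw [IntermediateField.mem_toSubfield]
    show algebraMap (MvPolynomial (Fin n ⊕ Fin n) ℂ) (KK n) (nu n k) ∈ genField n
    match k, hk with
    | 0, _ => rw [nu_zero, _root_.map_zero]; exact zero_mem _
    | 1, _ => rw [nu_one, _root_.map_zero]; exact zero_mem _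
    | (m + 2), hk => exact gen_mem_nu hn _ (by omega) (by omega)
  have hmemw : ∀ k, k < 2 * n → (∑ i : Fin n, cw n i * pW n i ^ k) ∈ (genField n).toSubfield := by
    intro k hk
    rw [← nubar_eq hn k]
    rw [IntermediateField.mem_toSubfield]
    show algebraMap (MvPolynomial (Fin n ⊕ Fin n) ℂ) (KK n) (nubar n k) ∈ genField n
    match k, hk with
    | 0, _ =>
      have : nubar n 0 = 0 := by simp [nubar]
      rw [this, _root_.map_zero]; exact zero_mem _
    | 1, _ =>
      have : nubar n 1 = 0 := by
        rw [nubar]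
        have h1 : ∑ i : Fin n, (Zv n i - Zv n (i + 1)) *
            ∑ m ∈ Finset.range 1, Wv n i ^ (1 - 1 - m) * Wv n (i + 1) ^ m
            = ∑ i : Fin n, (Zv n i - Zv n (i + 1)) := by
          refine Finset.sum_congr rfl fun i _ => ?_
          simp
        rw [h1, Finset.sum_sub_distrib, tel_sum (fun i => Zv n i), sub_self, mul_zero]
      rw [this, _root_.map_zero]; exact zero_mem _
    | 2, _ =>
      rw [nubar_two, _root_.map_neg]
      exact neg_mem (gen_mem_nu hn 2 le_rfl (by omega))
    | (m + 3), hk => exact gen_mem_nubar hn _ (by omega) (by omega)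
  constructor
  · have h := moments_mem hnz (pZ n) (cz n) (pZ_inj n) (fun i => cz_ne hn i)
      (genField n).toSubfield hmemz j
    rw [← nu_eq hn j, IntermediateField.mem_toSubfield] at h
    exact h
  · have h := moments_mem hnz (pW n) (cw n) (pW_inj n) (fun i => cw_ne hn i)
      (genField n).toSubfield hmemw j
    rw [← nubar_eq hn j, IntermediateField.mem_toSubfield] at h
    exact h
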